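/- arXiv:1412.8415 — 5 statements merged into one kernel-verified Lean document; each statement's English description precedes it below -/
import Mathlib

section
/- Let X be a real-valued random variable with mean zero, taking values in [-1/2, 1/2], and suppose E[h(X + 1/2)] ≥ ρ for some ρ ∈ [0,1], where h(p) = -p·log₂ p - (1-p)·log₂(1-p) is the binary entropy function. Then E[X²] ≤ (1/2 - h⁻¹(ρ))², where h⁻¹ is the inverse of h restricted to [0,1/2]. -/
/-!
With `G t = h(1/2 - √t)`, symmetry of `h` gives `h(X + 1/2) = G(X²)`. The function `G` is concave
on `[0, 1/4]`: up to the factor `1/ln 2` its derivative is `-L(u)/u` with `u = 2√t` and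
`L u = log (1 + u) - log (1 - u)`, and `L u / u = ∑ 2 u^(2k)/(2k+1)` increases on `(0, 1)`.
Jensen's inequality gives `ρ ≤ E[G(X²)] ≤ G(E[X²])`, and since `G` is strictly decreasing with
`G((1/2 - p)²) = h(p) = ρ`, this forces `E[X²] ≤ (1/2 - p)²`.
-/

open MeasureTheory Real

/-- Binary entropy in base 2. -/
noncomputable def binEnt (p : ℝ) : ℝ := -(p * Real.logb 2 p) - (1 - p) * Real.logb 2 (1 - p)

open Set

lemma binEnt_eq_binEntropy_div_log_two (p : ℝ) : binEnt p = binEntropy p / log 2 := by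
  simp only [binEnt, binEntropy, logb, log_inv]
  ring

lemma binEntropy_two_inv_sub_sqrt_sq (x : ℝ) :
    binEntropy (2⁻¹ - √(x ^ 2)) = binEntropy (x + 2⁻¹) := by
  rw [sqrt_sq_eq_abs]
  rcases abs_cases x with ⟨hx, -⟩ | ⟨hx, -⟩
  · rw [hx, ← binEntropy_two_inv_add, add_comm]
  · rw [hx, sub_neg_eq_add, add_comm]

lemma monotoneOn_log_one_add_sub_log_one_sub_div :
    MonotoneOn (fun u => (log (1 + u) - log (1 - u)) / u) (Ioo 0 1) := by
  have hasSum {u : ℝ} (hu : u ∈ Ioo 0 1) :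
      HasSum (fun k : ℕ => 2 * (1 / (2 * k + 1)) * u ^ (2 * k))
        ((log (1 + u) - log (1 - u)) / u) := by
    have h := (hasSum_log_sub_log_of_abs_lt_one (abs_lt.2 ⟨by linarith [hu.1], hu.2⟩)).div_const u
    simpa only [pow_succ, mul_div_assoc, mul_div_cancel_right₀ _ hu.1.ne'] using h
  intro a ha b hb hab
  refine hasSum_le (fun k => ?_) (hasSum ha) (hasSum hb)
  have := ha.1.le
  gcongr

lemma two_inv_sub_sqrt_mem_Icc {t : ℝ} (ht : t ∈ Icc 0 (1 / 4)) : 2⁻¹ - √t ∈ Icc 0 2⁻¹ := by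
  have : √t ≤ 2⁻¹ := sqrt_le_iff.2 ⟨by norm_num, by linarith [ht.2]⟩
  exact ⟨by linarith, by linarith [sqrt_nonneg t]⟩

lemma two_mul_sqrt_mem_Ioo {t : ℝ} (ht : t ∈ Ioo 0 (1 / 4)) : 2 * √t ∈ Ioo 0 1 := by
  have : √t < 2⁻¹ := (sqrt_lt' (by norm_num)).2 (by linarith [ht.2])
  exact ⟨by positivity [sqrt_pos.2 ht.1], by linarith⟩

lemma hasDerivAt_binEntropy_two_inv_sub_sqrt {t : ℝ} (ht : t ∈ Ioo 0 (1 / 4)) :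
    HasDerivAt (fun t => binEntropy (2⁻¹ - √t))
      (-((log (1 + 2 * √t) - log (1 - 2 * √t)) / (2 * √t))) t := by
  obtain ⟨hu0, hu1⟩ := two_mul_sqrt_mem_Ioo ht
  have hq0 : 2⁻¹ - √t ≠ 0 := by linarith
  have hq1 : 2⁻¹ - √t ≠ 1 := by linarith
  refine ((hasDerivAt_binEntropy hq0 hq1).comp t
    ((hasDerivAt_sqrt ht.1.ne').const_sub 2⁻¹)).congr_deriv ?_
  rw [show 1 - (2⁻¹ - √t) = (1 + 2 * √t) / 2 by ring, show 2⁻¹ - √t = (1 - 2 * √t) / 2 by ring,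
    log_div (by linarith) two_ne_zero, log_div (by linarith) two_ne_zero]
  ring

lemma concaveOn_binEntropy_two_inv_sub_sqrt :
    ConcaveOn ℝ (Icc 0 (1 / 4)) (fun t => binEntropy (2⁻¹ - √t)) := by
  refine AntitoneOn.concaveOn_of_deriv (convex_Icc _ _) (by fun_prop) ?_ ?_ <;>
    rw [interior_Icc]
  · exact fun t ht =>
      (hasDerivAt_binEntropy_two_inv_sub_sqrt ht).differentiableAt.differentiableWithinAt
  · intro a ha b hb hab
    rw [(hasDerivAt_binEntropy_two_inv_sub_sqrt ha).deriv,
      (hasDerivAt_binEntropy_two_inv_sub_sqrt hb).deriv, neg_le_neg_iff]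
    exact monotoneOn_log_one_add_sub_log_one_sub_div (two_mul_sqrt_mem_Ioo ha)
      (two_mul_sqrt_mem_Ioo hb) (by gcongr)

lemma strictAntiOn_binEntropy_two_inv_sub_sqrt :
    StrictAntiOn (fun t => binEntropy (2⁻¹ - √t)) (Icc 0 (1 / 4)) := fun _ ha _ hb hab =>
  binEntropy_strictMonoOn (two_inv_sub_sqrt_mem_Icc hb) (two_inv_sub_sqrt_mem_Icc ha)
    (sub_lt_sub_left (sqrt_lt_sqrt ha.1 hab) _)

theorem integral_binEntropy_two_inv_sub_sqrt_le {Ω : Type*} [MeasurableSpace Ω] {μ : Measure Ω}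
    [IsProbabilityMeasure μ] {Y : Ω → ℝ} (hY : Integrable Y μ)
    (hbd : ∀ᵐ ω ∂μ, Y ω ∈ Icc 0 (1 / 4)) :
    ∫ ω, binEntropy (2⁻¹ - √(Y ω)) ∂μ ≤ binEntropy (2⁻¹ - √(∫ ω, Y ω ∂μ)) := by
  have hbound : ∀ᵐ ω ∂μ, ‖binEntropy (2⁻¹ - √(Y ω))‖ ≤ log 2 := hbd.mono fun _ h => by
    obtain ⟨h0, h1⟩ := two_inv_sub_sqrt_mem_Icc h
    rw [norm_of_nonneg (binEntropy_nonneg h0 (by linarith))]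
    exact binEntropy_le_log_two
  refine concaveOn_binEntropy_two_inv_sub_sqrt.le_map_integral (by fun_prop) isClosed_Icc hbd hY
    (Integrable.of_bound ?_ _ hbound)
  exact (by fun_prop : Continuous fun t => binEntropy (2⁻¹ - √t)).comp_aestronglyMeasurable
    hY.aestronglyMeasurable

theorem stmt_0_general {Ω : Type*} [MeasurableSpace Ω] (μ : Measure Ω) [IsProbabilityMeasure μ]
    (X : Ω → ℝ) (hXmeas : Measurable X)
    (hbd : ∀ᵐ ω ∂μ, X ω ∈ Set.Icc (-(1/2) : ℝ) (1/2))
    (ρ : ℝ)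
    (hent : ρ ≤ ∫ ω, binEnt (X ω + 1/2) ∂μ)
    (p : ℝ) (hp : p ∈ Set.Icc (0:ℝ) (1/2)) (hhp : binEnt p = ρ) :
    ∫ ω, (X ω)^2 ∂μ ≤ (1/2 - p)^2 := by
  have hsq : ∀ᵐ ω ∂μ, X ω ^ 2 ∈ Icc 0 (1 / 4) :=
    hbd.mono fun _ h => ⟨sq_nonneg _, by nlinarith [h.1, h.2]⟩
  have hint : Integrable (fun ω => X ω ^ 2) μ :=
    Integrable.of_bound (hXmeas.pow_const 2).aestronglyMeasurable (1 / 4)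
      (hsq.mono fun _ h => (norm_of_nonneg h.1).trans_le h.2)
  have hp' : (1 / 2 - p) ^ 2 ∈ Icc 0 (1 / 4) := ⟨sq_nonneg _, by nlinarith [hp.1, hp.2]⟩
  have hρ : binEntropy (2⁻¹ - √((1 / 2 - p) ^ 2)) = ρ * log 2 := by
    rw [binEntropy_two_inv_sub_sqrt_sq, ← hhp, binEnt_eq_binEntropy_div_log_two,
      div_mul_cancel₀ _ (log_pos one_lt_two).ne', ← binEntropy_one_sub]
    ring_nf
  have hent' : ρ * log 2 ≤ ∫ ω, binEntropy (2⁻¹ - √(X ω ^ 2)) ∂μ := by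
    simp_rw [binEnt_eq_binEntropy_div_log_two, integral_div, one_div] at hent
    simpa only [binEntropy_two_inv_sub_sqrt_sq] using (le_div_iff₀ (log_pos one_lt_two)).1 hent
  refine (strictAntiOn_binEntropy_two_inv_sub_sqrt.le_iff_ge hp'
    ((convex_Icc _ _).integral_mem isClosed_Icc hsq hint)).1 ?_
  calc binEntropy (2⁻¹ - √((1 / 2 - p) ^ 2)) = ρ * log 2 := hρ
    _ ≤ ∫ ω, binEntropy (2⁻¹ - √(X ω ^ 2)) ∂μ := hent'
    _ ≤ binEntropy (2⁻¹ - √(∫ ω, X ω ^ 2 ∂μ)) := integral_binEntropy_two_inv_sub_sqrt_le hint hsq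

theorem stmt_0 {Ω : Type*} [MeasurableSpace Ω] (μ : Measure Ω) [IsProbabilityMeasure μ]
    (X : Ω → ℝ) (hXmeas : Measurable X)
    (hbd : ∀ᵐ ω ∂μ, X ω ∈ Set.Icc (-(1/2) : ℝ) (1/2))
    (hmean : ∫ ω, X ω ∂μ = 0)
    (ρ : ℝ) (hρ : ρ ∈ Set.Icc (0:ℝ) 1)
    (hent : ρ ≤ ∫ ω, binEnt (X ω + 1/2) ∂μ)
    (p : ℝ) (hp : p ∈ Set.Icc (0:ℝ) (1/2)) (hhp : binEnt p = ρ) :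
    ∫ ω, (X ω)^2 ∂μ ≤ (1/2 - p)^2 :=
  stmt_0_general μ X hXmeas hbd ρ hent p hp hhp
end

section
/- The function Q(y) = h(1/2 - √y) is concave on the interval [0, 1/4], where h is the binary entropy function with logarithm base 2. -/
open Real

/-!
Put `p = 1/2 + √y` and `logit p = log p - log (1 - p)`. Since `h' p = -logit p / log 2` and
`logit` is odd about `1/2`, the chain rule gives `Q' y = -(logit p / (p - 1/2)) / (2 log 2)`.
On `[1/2, 1)` the logit is convex (its derivative `1 / (p (1 - p))` increases) and vanishes at
`1/2`, so its secant slope from `1/2` increases with `p`, hence with `y`: `Q'` decreases.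
-/

open Set

namespace Real

noncomputable def logit (p : ℝ) : ℝ := log p - log (1 - p)

lemma logit_half : logit (1 / 2) = 0 := by norm_num [logit]

lemma hasDerivAt_logit {p : ℝ} (hp₀ : 0 < p) (hp₁ : p < 1) :
    HasDerivAt logit (1 / (p * (1 - p))) p := by
  have hsub : 1 - p ≠ 0 := sub_ne_zero.2 hp₁.ne'
  have h : HasDerivAt (fun q ↦ log q - log (1 - q)) (p⁻¹ - -1 / (1 - p)) p :=
    (hasDerivAt_log hp₀.ne').sub (((hasDerivAt_id' p).const_sub 1).log hsub)
  refine h.congr_deriv ?_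
  field_simp
  ring

lemma convexOn_logit : ConvexOn ℝ (Ico (1 / 2) 1) logit := by
  have hderiv : ∀ p ∈ Ico (1 / 2 : ℝ) 1, HasDerivAt logit (1 / (p * (1 - p))) p :=
    fun p hp ↦ hasDerivAt_logit (by linarith [hp.1]) hp.2
  refine MonotoneOn.convexOn_of_deriv (convex_Ico _ _) ?_ ?_ ?_
  · exact fun p hp ↦ (hderiv p hp).continuousAt.continuousWithinAt
  · rw [interior_Ico]
    exact fun p hp ↦ (hderiv p (Ioo_subset_Ico_self hp)).differentiableAt.differentiableWithinAt
  · rw [interior_Ico]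
    intro p hp q hq hpq
    rw [(hderiv p (Ioo_subset_Ico_self hp)).deriv, (hderiv q (Ioo_subset_Ico_self hq)).deriv]
    apply one_div_le_one_div_of_le
    · nlinarith [hq.1, hq.2]
    · nlinarith [hp.1, hq.1]

lemma monotoneOn_logit_div_sub_half :
    MonotoneOn (fun p ↦ logit p / (p - 1 / 2)) (Ioo (1 / 2) 1) := by
  intro p hp q hq hpq
  have h := convexOn_logit.secant_mono (a := 1 / 2) (by norm_num) (Ioo_subset_Ico_self hp)
    (Ioo_subset_Ico_self hq) hp.1.ne' hq.1.ne' hpq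
  simpa only [logit_half, sub_zero] using h

lemma sqrt_mem_Ioo_of_mem_Ioo {y : ℝ} (hy : y ∈ Ioo 0 (1 / 4)) : √y ∈ Ioo 0 (1 / 2) :=
  ⟨sqrt_pos.2 hy.1, (sqrt_lt' (by norm_num)).2 (by linarith [hy.2])⟩

lemma hasDerivAt_binEntropy_half_sub_sqrt {y : ℝ} (hy : y ∈ Ioo 0 (1 / 4)) :
    HasDerivAt (fun y ↦ binEntropy (1 / 2 - √y)) (-(logit (1 / 2 + √y) / √y) / 2) y := by
  obtain ⟨hs₀, hs₁⟩ := sqrt_mem_Ioo_of_mem_Ioo hy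
  have hinner : HasDerivAt (fun y ↦ 1 / 2 - √y) (-(1 / (2 * √y))) y :=
    (hasDerivAt_sqrt hy.1.ne').const_sub _
  have h := (hasDerivAt_binEntropy (p := 1 / 2 - √y) (by linarith) (by linarith)).comp y hinner
  refine h.congr_deriv ?_
  rw [logit, show 1 - (1 / 2 - √y) = 1 / 2 + √y by ring,
    show 1 - (1 / 2 + √y) = 1 / 2 - √y by ring]
  field_simp

theorem concaveOn_binEntropy_half_sub_sqrt :
    ConcaveOn ℝ (Icc 0 (1 / 4)) (fun y ↦ binEntropy (1 / 2 - √y)) := by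
  refine AntitoneOn.concaveOn_of_deriv (convex_Icc _ _) (by fun_prop) ?_ ?_
  · rw [interior_Icc]
    exact fun y hy ↦
      (hasDerivAt_binEntropy_half_sub_sqrt hy).differentiableAt.differentiableWithinAt
  · rw [interior_Icc]
    intro y hy z hz hyz
    rw [(hasDerivAt_binEntropy_half_sub_sqrt hy).deriv,
      (hasDerivAt_binEntropy_half_sub_sqrt hz).deriv]
    have hmem {x : ℝ} (hx : x ∈ Ioo 0 (1 / 4)) : 1 / 2 + √x ∈ Ioo (1 / 2 : ℝ) 1 := by
      obtain ⟨h₀, h₁⟩ := sqrt_mem_Ioo_of_mem_Ioo hx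
      constructor <;> linarith
    have h := monotoneOn_logit_div_sub_half (hmem hy) (hmem hz) (by gcongr)
    simp only [add_sub_cancel_left] at h
    linarith

end Real

lemma binEnt_eq_inv_log_two_mul (p : ℝ) : binEnt p = (log 2)⁻¹ * binEntropy p := by
  simp only [binEnt, binEntropy, logb, log_inv]
  ring

theorem stmt_1 :
    ConcaveOn ℝ (Set.Icc (0:ℝ) (1/4)) (fun y => binEnt (1/2 - Real.sqrt y)) := by
  simp_rw [binEnt_eq_inv_log_two_mul]
  exact concaveOn_binEntropy_half_sub_sqrt.smul (by positivity)
end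

section
/- Let X and Y be mean-zero random variables taking values in [-1/2, 1/2], and suppose E[h(Y + 1/2)] ≥ ρ for some ρ ∈ [0,1]. Then E[XY] ≤ (1/2)·(1/2 - h⁻¹(ρ)), where h is the binary entropy function and h⁻¹ its inverse on [0,1/2]. -/
open MeasureTheory Real

lemma binEnt_eq (x : ℝ) : binEnt x = Real.binEntropy x / Real.log 2 := by
  unfold binEnt Real.binEntropy
  rw [Real.log_inv, Real.log_inv, Real.logb, Real.logb]
  ring

lemma tangent (p q : ℝ) (hp0 : 0 < p) (hp1 : p < 1) (hq : q ∈ Set.Icc (0:ℝ) 1) :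
    Real.binEntropy q ≤ Real.binEntropy p + (Real.log (1 - p) - Real.log p) * (q - p) := by
  have hconc := Real.strictConcave_binEntropy.concaveOn
  have hder : HasDerivAt Real.binEntropy (Real.log (1 - p) - Real.log p) p :=
    Real.hasDerivAt_binEntropy hp0.ne' (by linarith)
  have hpS : p ∈ Set.Icc (0:ℝ) 1 := ⟨hp0.le, hp1.le⟩
  rcases lt_trichotomy q p with h | h | h
  · have := hconc.le_slope_of_hasDerivAt hq hpS h hder
    rw [slope_def_field] at this
    rw [le_div_iff₀ (by linarith : (0:ℝ) < p - q)] at this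
    nlinarith
  · simp [h]
  · have := hconc.slope_le_of_hasDerivAt hpS hq h hder
    rw [slope_def_field] at this
    rw [div_le_iff₀ (by linarith : (0:ℝ) < q - p)] at this
    nlinarith

/-- multiplied pointwise inequality -/
lemma pointwise (p q : ℝ) (hp0 : 0 < p) (hp1 : p < 1/2) (hq : q ∈ Set.Icc (0:ℝ) 1) :
    (Real.log (1 - p) - Real.log p) * |q - 1/2| ≤
      (Real.log (1 - p) - Real.log p) * (1/2 - p)
        + (Real.binEntropy p - Real.binEntropy q) := by
  set L := Real.log (1 - p) - Real.log p with hL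
  have hLpos : 0 < L := by
    have := Real.log_lt_log hp0 (by linarith : p < 1 - p)
    linarith
  rcases le_or_gt q (1/2) with h | h
  · have ht := tangent p q hp0 (by linarith) hq
    rw [abs_of_nonpos (by linarith)]
    nlinarith
  · have ht := tangent (1 - p) q (by linarith) (by linarith) hq
    rw [Real.binEntropy_one_sub] at ht
    have hlog : Real.log (1 - (1 - p)) - Real.log (1 - p) = -L := by
      rw [hL]; ring_nf
    rw [hlog] at ht
    rw [abs_of_nonneg (by linarith)]
    nlinarith

theorem stmt_6 {Ω : Type*} [MeasurableSpace Ω] (μ : Measure Ω) [IsProbabilityMeasure μ]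
    (X Y : Ω → ℝ) (hXmeas : Measurable X) (hYmeas : Measurable Y)
    (hbdX : ∀ᵐ ω ∂μ, X ω ∈ Set.Icc (-(1/2) : ℝ) (1/2))
    (hbdY : ∀ᵐ ω ∂μ, Y ω ∈ Set.Icc (-(1/2) : ℝ) (1/2))
    (hmeanX : ∫ ω, X ω ∂μ = 0) (hmeanY : ∫ ω, Y ω ∂μ = 0)
    (ρ : ℝ) (hρ : ρ ∈ Set.Icc (0:ℝ) 1)
    (hent : ρ ≤ ∫ ω, binEnt (Y ω + 1/2) ∂μ)
    (p : ℝ) (hp : p ∈ Set.Icc (0:ℝ) (1/2)) (hhp : binEnt p = ρ) :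
    ∫ ω, X ω * Y ω ∂μ ≤ (1/2) * (1/2 - p) := by
  have hlog2 : (0:ℝ) < Real.log 2 := Real.log_pos (by norm_num)
  set f : Ω → ℝ := fun ω => Real.binEntropy (Y ω + 1/2) with hf
  have hfmeas : Measurable f :=
    Real.binEntropy_continuous.measurable.comp (hYmeas.add_const _)
  have hfbd : ∀ᵐ ω ∂μ, ‖f ω‖ ≤ Real.log 2 := by
    filter_upwards [hbdY] with ω hω
    rw [Real.norm_eq_abs, abs_le]
    refine ⟨?_, Real.binEntropy_le_log_two⟩
    have := Real.binEntropy_nonneg (p := Y ω + 1/2) (by linarith [hω.1]) (by linarith [hω.2])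
    linarith
  have hf_int : Integrable f μ :=
    (integrable_const (Real.log 2)).mono' hfmeas.aestronglyMeasurable hfbd
  have hXY_int : Integrable (fun ω => X ω * Y ω) μ := by
    refine (integrable_const ((1:ℝ)/4)).mono'
      ((hXmeas.mul hYmeas).aestronglyMeasurable) ?_
    filter_upwards [hbdX, hbdY] with ω hx hy
    rw [Real.norm_eq_abs, abs_mul]
    have h1 : |X ω| ≤ 1/2 := abs_le.2 ⟨by linarith [hx.1], hx.2⟩
    have h2 : |Y ω| ≤ 1/2 := abs_le.2 ⟨by linarith [hy.1], hy.2⟩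
    nlinarith [abs_nonneg (X ω), abs_nonneg (Y ω)]
  -- binEntropy p ≤ ∫ f
  have hIeq : ∫ ω, binEnt (Y ω + 1/2) ∂μ = (∫ ω, f ω ∂μ) / Real.log 2 := by
    simp_rw [binEnt_eq]
    exact integral_div _ _
  have hI : Real.binEntropy p ≤ ∫ ω, f ω ∂μ := by
    have h1 : Real.binEntropy p / Real.log 2 ≤ (∫ ω, f ω ∂μ) / Real.log 2 := by
      rw [← binEnt_eq, hhp, ← hIeq]; exact hent
    exact (div_le_div_iff_of_pos_right hlog2).1 h1
  rcases eq_or_lt_of_le hp.1 with hp0 | hp0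
  · -- p = 0
    subst hhp
    rw [← hp0]
    have : ∫ ω, X ω * Y ω ∂μ ≤ ∫ _ω, (1/4 : ℝ) ∂μ := by
      refine integral_mono_ae hXY_int (integrable_const _) ?_
      filter_upwards [hbdX, hbdY] with ω hx hy
      nlinarith [hx.1, hx.2, hy.1, hy.2]
    norm_num at this ⊢
    linarith
  rcases eq_or_lt_of_le hp.2 with hph | hph
  · -- p = 1/2
    have hbp : Real.binEntropy p = Real.log 2 := by
      rw [hph, show (1/2:ℝ) = 2⁻¹ by norm_num, Real.binEntropy_two_inv]
    have hg_nonneg : 0 ≤ᵐ[μ] fun ω => Real.log 2 - f ω := by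
      filter_upwards with ω
      simp only [Pi.zero_apply]
      exact sub_nonneg.2 Real.binEntropy_le_log_two
    have hg_int : Integrable (fun ω => Real.log 2 - f ω) μ :=
      (integrable_const _).sub hf_int
    have hg0 : ∫ ω, (Real.log 2 - f ω) ∂μ = 0 := by
      have h1 : ∫ ω, (Real.log 2 - f ω) ∂μ = Real.log 2 - ∫ ω, f ω ∂μ := by
        rw [integral_sub (integrable_const _) hf_int]; simp
      have h2 : 0 ≤ ∫ ω, (Real.log 2 - f ω) ∂μ := integral_nonneg_of_ae hg_nonneg
      rw [h1] at h2 ⊢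
      rw [hbp] at hI
      linarith
    have hae : (fun ω => Real.log 2 - f ω) =ᵐ[μ] 0 :=
      (integral_eq_zero_iff_of_nonneg_ae hg_nonneg hg_int).1 hg0
    have hY0 : ∀ᵐ ω ∂μ, Y ω = 0 := by
      filter_upwards [hae] with ω hω
      have hfe : f ω = Real.log 2 := by
        have : Real.log 2 - f ω = 0 := hω
        linarith
      have := (Real.binEntropy_eq_log_two (p := Y ω + 1/2)).1 hfe
      norm_num at this
      linarith
    have hXY0 : (fun ω => X ω * Y ω) =ᵐ[μ] 0 := by
      filter_upwards [hY0] with ω hω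
      simp [hω]
    rw [integral_congr_ae hXY0]
    simp [hph]
  · -- 0 < p < 1/2
    set L := Real.log (1 - p) - Real.log p with hLdef
    have hLpos : 0 < L := by
      have := Real.log_lt_log hp0 (by linarith : p < 1 - p)
      linarith
    set c : ℝ := 1 / (2 * L) with hc
    have hcpos : 0 < c := by positivity
    have hbound_int : Integrable
        (fun ω => (1/2) * (1/2 - p) + c * (Real.binEntropy p - f ω)) μ :=
      (integrable_const _).add (((integrable_const _).sub hf_int).const_mul c)
    have hmono : ∫ ω, X ω * Y ω ∂μ ≤
        ∫ ω, ((1/2) * (1/2 - p) + c * (Real.binEntropy p - f ω)) ∂μ := by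
      refine integral_mono_ae hXY_int hbound_int ?_
      filter_upwards [hbdX, hbdY] with ω hx hy
      have hq : Y ω + 1/2 ∈ Set.Icc (0:ℝ) 1 := ⟨by linarith [hy.1], by linarith [hy.2]⟩
      have hpw := pointwise p (Y ω + 1/2) hp0 hph hq
      have habs : |Y ω + 1/2 - 1/2| = |Y ω| := by norm_num
      rw [habs] at hpw
      have h2 : X ω * Y ω ≤ (1/2) * |Y ω| := by
        have h1 : |X ω| ≤ 1/2 := abs_le.2 ⟨by linarith [hx.1], hx.2⟩
        calc X ω * Y ω ≤ |X ω * Y ω| := le_abs_self _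
          _ = |X ω| * |Y ω| := abs_mul _ _
          _ ≤ (1/2) * |Y ω| := mul_le_mul_of_nonneg_right h1 (abs_nonneg _)
      have h3 : (|Y ω| - (1/2 - p)) / 2 ≤ (Real.binEntropy p - f ω) / (2 * L) := by
        rw [div_le_div_iff₀ (by norm_num) (by positivity)]
        nlinarith
      have hceq : c * (Real.binEntropy p - f ω) = (Real.binEntropy p - f ω) / (2 * L) := by
        rw [hc]; ring
      rw [hceq]
      linarith
    have hcomp : ∫ ω, ((1/2) * (1/2 - p) + c * (Real.binEntropy p - f ω)) ∂μ =
        (1/2) * (1/2 - p) + c * (Real.binEntropy p - ∫ ω, f ω ∂μ) := by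
      have hsub_int : Integrable (fun ω => Real.binEntropy p - f ω) μ :=
        (integrable_const _).sub hf_int
      have h1 : ∫ ω, (Real.binEntropy p - f ω) ∂μ = Real.binEntropy p - ∫ ω, f ω ∂μ := by
        rw [integral_sub (integrable_const _) hf_int]
        simp
      have h2 : ∫ a, c * (Real.binEntropy p - f a) ∂μ
          = c * (Real.binEntropy p - ∫ ω, f ω ∂μ) := by
        rw [integral_const_mul, h1]
      rw [integral_add (integrable_const _) (hsub_int.const_mul c)]
      simp [h2]
    rw [hcomp] at hmono
    have hfinal : c * (Real.binEntropy p - ∫ ω, f ω ∂μ) ≤ 0 :=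
      mul_nonpos_of_nonneg_of_nonpos hcpos.le (by linarith)
    linarith
end

section
/- Let 𝒢 be a monotone (downward-closed) family of subsets of an n-element set such that no subset of cardinality d is k-shattered by 𝒢 (i.e., for no d-element set S does every subset of S appear as G ∩ S for at least k members G of 𝒢). Then for every t with d ≤ t ≤ n, the number of members of 𝒢 of cardinality t is strictly less than k·C(n,d)/C(t,d). -/
/-!
Fix `t`. By monotonicity, `G ↦ (G \ S) ∪ T` injects the members of `𝒢` containing a `d`-set `S`
into the members `G` with `G ∩ S = T`, for every `T ⊆ S`. As `S` is not `k`-shattered, some trace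
`T` is realised fewer than `k` times, so fewer than `k` members of `𝒢` contain `S`. Double
counting the pairs `S ⊆ G` with `|S| = d` and `G ∈ 𝒢`, `|G| = t`, gives
`|𝒢_t| C(t,d) < k C(n,d)`.
-/

/-- `S` is `k`-shattered by `𝒢`: every subset of `S` arises as `G ∩ S` for at
least `k` members `G` of `𝒢`. -/
def KShattered {n : ℕ} (𝒢 : Finset (Finset (Fin n))) (k : ℕ) (S : Finset (Fin n)) : Prop :=
  ∀ T ⊆ S, k ≤ (𝒢.filter (fun G => G ∩ S = T)).card

open Finset

section Traces

variable {α : Type*} [DecidableEq α]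

theorem card_filter_superset_le_card_filter_inter_eq {𝒢 : Finset (Finset α)}
    (h𝒢 : IsLowerSet (𝒢 : Set (Finset α))) {S T : Finset α} (hTS : T ⊆ S) :
    #{G ∈ 𝒢 | S ⊆ G} ≤ #{G ∈ 𝒢 | G ∩ S = T} := by
  refine card_le_card_of_injOn (fun G => G \ S ∪ T) (fun G hG => ?_) (fun G hG G' hG' hGG' => ?_)
  · simp only [coe_filter, Set.mem_ofPred_eq] at hG ⊢
    refine ⟨h𝒢 (union_subset sdiff_subset (hTS.trans hG.2)) hG.1, ?_⟩
    ext x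
    grind
  · simp only [coe_filter, Set.mem_ofPred_eq] at hG hG'
    have recover : ∀ A, S ⊆ A → A \ S ∪ T ∪ S = A := fun A hA => by
      rw [union_assoc, union_eq_right.mpr hTS, sdiff_union_of_subset hA]
    rw [← recover G hG.2, ← recover G' hG'.2]
    exact congrArg (· ∪ S) hGG'

theorem sum_card_filter_superset_powersetCard [Fintype α] {ℱ : Finset (Finset α)} {t : ℕ}
    (hℱ : ∀ G ∈ ℱ, #G = t) (d : ℕ) :
    ∑ S ∈ powersetCard d univ, #{G ∈ ℱ | S ⊆ G} = #ℱ * t.choose d := by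
  calc ∑ S ∈ powersetCard d univ, #{G ∈ ℱ | S ⊆ G}
      = ∑ G ∈ ℱ, #{S ∈ powersetCard d univ | S ⊆ G} := by
        simpa only [bipartiteAbove, bipartiteBelow] using
          (sum_card_bipartiteAbove_eq_sum_card_bipartiteBelow (s := ℱ) (t := powersetCard d univ)
            (r := fun G S => S ⊆ G)).symm
    _ = ∑ G ∈ ℱ, t.choose d := sum_congr rfl fun G hG => by
        rw [← hℱ G hG, ← card_powersetCard]
        congr 1
        ext S
        simp [and_comm]
    _ = #ℱ * t.choose d := by rw [sum_const, smul_eq_mul]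

end Traces

theorem card_filter_superset_lt_of_not_kShattered {n k : ℕ} {𝒢 : Finset (Finset (Fin n))}
    (h𝒢 : IsLowerSet (𝒢 : Set (Finset (Fin n)))) {S : Finset (Fin n)}
    (hS : ¬ KShattered 𝒢 k S) : #{G ∈ 𝒢 | S ⊆ G} < k := by
  simp only [KShattered, not_forall, not_le] at hS
  obtain ⟨T, hTS, hT⟩ := hS
  exact (card_filter_superset_le_card_filter_inter_eq h𝒢 hTS).trans_lt hT

theorem stmt_11 {n d k : ℕ} (𝒢 : Finset (Finset (Fin n)))
    (hmono : ∀ G ∈ 𝒢, ∀ G' ⊆ G, G' ∈ 𝒢)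
    (hshat : ∀ S : Finset (Fin n), S.card = d → ¬ KShattered 𝒢 k S) :
    ∀ t : ℕ, d ≤ t → t ≤ n →
      ((𝒢.filter (fun G => G.card = t)).card : ℚ) <
        (k : ℚ) * (Nat.choose n d : ℚ) / (Nat.choose t d : ℚ) := by
  intro t hdt htn
  have hlower : IsLowerSet (𝒢 : Set (Finset (Fin n))) := fun G G' hG'G hG => hmono G hG G' hG'G
  have hfew : ∀ S ∈ powersetCard d univ, #{G ∈ {G ∈ 𝒢 | #G = t} | S ⊆ G} < k := fun S hS =>
    (card_le_card (monotone_filter_left _ (filter_subset _ _))).trans_lt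
      (card_filter_superset_lt_of_not_kShattered hlower (hshat S (mem_powersetCard.mp hS).2))
  have hcount : #{G ∈ 𝒢 | #G = t} * t.choose d < k * n.choose d :=
    calc #{G ∈ 𝒢 | #G = t} * t.choose d
        = ∑ S ∈ powersetCard d univ, #{G ∈ {G ∈ 𝒢 | #G = t} | S ⊆ G} :=
          (sum_card_filter_superset_powersetCard (fun G hG => (mem_filter.mp hG).2) d).symm
      _ < ∑ S ∈ powersetCard d (univ : Finset (Fin n)), k :=
          sum_lt_sum_of_nonempty (powersetCard_nonempty.mpr (by simpa using hdt.trans htn)) hfew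
      _ = k * n.choose d := by simp [mul_comm]
  rw [lt_div_iff₀ (by exact_mod_cast Nat.choose_pos hdt)]
  exact_mod_cast hcount
end

section
/- Let ℱ₁ be a family of subsets of [n] that shatters some set S with |S| = log₂|ℱ₁|, and let ℱ₂ be a family of subsets of [n] such that the pair (ℱ₁, ℱ₂) is multiset-union-free: for all A, B ∈ ℱ₁ and C, D ∈ ℱ₂, the multiset unions A ⊎ C = B ⊎ D imply A = B and C = D. Then |ℱ₂| ≤ 3^(n - |S|). -/
/-- `S` is shattered by `ℱ`. -/
def Shattered {n : ℕ} (ℱ : Finset (Finset (Fin n))) (S : Finset (Fin n)) : Prop :=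
  ∀ T ⊆ S, ∃ F ∈ ℱ, F ∩ S = T

theorem stmt_16 {n : ℕ} (ℱ₁ ℱ₂ : Finset (Finset (Fin n))) (S : Finset (Fin n))
    (hS : Shattered ℱ₁ S) (hcard : ℱ₁.card = 2 ^ S.card)
    (hfree : ∀ A ∈ ℱ₁, ∀ B ∈ ℱ₁, ∀ C ∈ ℱ₂, ∀ D ∈ ℱ₂,
      (∀ x : Fin n, ((if x ∈ A then 1 else 0) + (if x ∈ C then 1 else 0) : ℕ) =
        (if x ∈ B then 1 else 0) + (if x ∈ D then 1 else 0)) → A = B ∧ C = D) :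
    ℱ₂.card ≤ 3 ^ (n - S.card) := by
  classical
  choose g hg1 hg2 using fun C : Finset (Fin n) => hS (S \ C) Finset.sdiff_subset
  have mem_g : ∀ C : Finset (Fin n), ∀ x ∈ S, (x ∈ g C ↔ x ∉ C) := by
    intro C x hx
    constructor
    · intro h'
      have : x ∈ g C ∩ S := Finset.mem_inter.2 ⟨h', hx⟩
      rw [hg2] at this
      exact (Finset.mem_sdiff.1 this).2
    · intro h'
      have : x ∈ S \ C := Finset.mem_sdiff.2 ⟨hx, h'⟩
      rw [← hg2 C] at this
      exact (Finset.mem_inter.1 this).1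
  have key : ∀ C ∈ ℱ₂, ∀ D ∈ ℱ₂,
      (∀ x : Fin n, x ∉ S → ((if x ∈ g C then 1 else 0) + (if x ∈ C then 1 else 0) : ℕ) =
        (if x ∈ g D then 1 else 0) + (if x ∈ D then 1 else 0)) → C = D := by
    intro C hC D hD h
    refine (hfree (g C) (hg1 C) (g D) (hg1 D) C hC D hD ?_).2
    intro x
    by_cases hx : x ∈ S
    · have hc := mem_g C x hx
      have hd := mem_g D x hx
      by_cases h1 : x ∈ C <;> by_cases h2 : x ∈ D <;> simp [hc, hd, h1, h2]
    · exact h x hx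
  let F : {C // C ∈ ℱ₂} → ({x // x ∈ Sᶜ} → Fin 3) := fun C x =>
    ⟨(if x.1 ∈ g C.1 then 1 else 0) + (if x.1 ∈ C.1 then 1 else 0), by split_ifs <;> omega⟩
  have hinj : Function.Injective F := by
    intro C D h
    apply Subtype.ext
    apply key C.1 C.2 D.1 D.2
    intro x hx
    have := congrFun h ⟨x, Finset.mem_compl.2 hx⟩
    simpa [F, Fin.ext_iff] using this
  calc ℱ₂.card = Fintype.card {C // C ∈ ℱ₂} := (Fintype.card_coe _).symm
    _ ≤ Fintype.card ({x // x ∈ Sᶜ} → Fin 3) := Fintype.card_le_of_injective F hinj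
    _ = 3 ^ (n - S.card) := by
        simp [Fintype.card_fun, Fintype.card_coe, Finset.card_compl]
end
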